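/- The power series f = (x_3^2 + x_1 x_2)(x_3 + x_1 x_2) ∈ K[[x_1,x_2,x_3]] has Newton polyhedron with a loose edge E with endpoints (1,1,1) and (2,2,0), and f|_E = x_1 x_2 (x_3 + x_1 x_2); yet there do not exist power series g, h with f = gh, g|_{E_1} = x_2(x_3 + x_1 x_2) and h|_{E_2} = x_1 for any decomposition E = E_1 + E_2. -/

import Mathlib

open scoped Pointwise

noncomputable section

/-- Standard scalar product on `Fin n → ℝ`. -/
def dotR {n : ℕ} (ξ a : Fin n → ℝ) : ℝ := ∑ i, ξ i * a i

/-- The nonnegative orthant in `Fin n → ℝ`. -/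
def posOrthant (n : ℕ) : Set (Fin n → ℝ) := {x | ∀ i, 0 ≤ x i}

/-- A Newton polyhedron: the convex hull of `S + ℝ_{≥0}^n` for a nonempty `S ⊆ ℕ^n`. -/
def IsNewtonPolyhedron {n : ℕ} (Δ : Set (Fin n → ℝ)) : Prop :=
  ∃ S : Set (Fin n → ℕ), S.Nonempty ∧
    Δ = convexHull ℝ (((fun α : Fin n → ℕ => fun i => (α i : ℝ)) '' S) + posOrthant n)

/-- The face of `Δ` in direction `ξ`: the points of `Δ` minimizing `⟨ξ, ·⟩`. -/
def faceOf {n : ℕ} (Δ : Set (Fin n → ℝ)) (ξ : Fin n → ℝ) : Set (Fin n → ℝ) :=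
  {a ∈ Δ | ∀ b ∈ Δ, dotR ξ a ≤ dotR ξ b}

/-- `F` is a face of `Δ` (cut out by some `ξ` with nonnegative entries). -/
def IsFaceOf {n : ℕ} (Δ F : Set (Fin n → ℝ)) : Prop :=
  ∃ ξ : Fin n → ℝ, (∀ i, 0 ≤ ξ i) ∧ F = faceOf Δ ξ

/-- The dimension of a face: the rank of its direction space. -/
def faceDim {n : ℕ} (F : Set (Fin n → ℝ)) : ℕ := Module.finrank ℝ (vectorSpan ℝ F)

/-- A loose edge: a compact edge not contained in any compact face of dimension ≥ 2. -/
def IsLooseEdge {n : ℕ} (Δ E : Set (Fin n → ℝ)) : Prop :=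
  IsFaceOf Δ E ∧ IsCompact E ∧ faceDim E = 1 ∧
    ∀ F : Set (Fin n → ℝ), IsFaceOf Δ F → IsCompact F → E ⊆ F → faceDim F ≤ 1

/-- `v` is a vertex of `Δ` : the singleton `{v}` is a face. -/
def IsVertexOf {n : ℕ} (Δ : Set (Fin n → ℝ)) (v : Fin n → ℝ) : Prop :=
  IsFaceOf Δ {v}

/-- The Newton polyhedron of a power series: convex hull of (support of f) + ℝ_{≥0}^n. -/
def newtonPolyhedron {K : Type*} [Field K] {n : ℕ} (f : MvPowerSeries (Fin n) K) :
    Set (Fin n → ℝ) :=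
  convexHull ℝ
    {x | ∃ α : Fin n →₀ ℕ, MvPowerSeries.coeff α f ≠ 0 ∧
      ∃ z ∈ posOrthant n, x = (fun i => (α i : ℝ)) + z}

open Classical in
/-- The symbolic restriction of a power series `f` to a subset `A ⊆ ℝ^n`. -/
def restrictPS {K : Type*} [Field K] {n : ℕ} (f : MvPowerSeries (Fin n) K)
    (A : Set (Fin n → ℝ)) : MvPowerSeries (Fin n) K :=
  fun α => if (fun i => (α i : ℝ)) ∈ A then MvPowerSeries.coeff α f else 0

/-!
The face structure near `E` is governed by weights `ξ ≥ 0` with `ξ₃ = ξ₁ + ξ₂`: for these the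
exponents `(1,1,1)` and `(2,2,0)` of `f` have weight `2(ξ₁ + ξ₂)` and the other two exponents
weight `3(ξ₁ + ξ₂)`. Taking `ξ = (1,1,2)` exhibits `E` as a face. A compact face of the Newton
polyhedron comes from a strictly positive `ξ`, and if it contains `E` then `ξ₃ = ξ₁ + ξ₂`, so the
face is again `E`: the edge is loose.

A factorization `f = gh` with the prescribed restrictions would have `x₂x₃` in `g` and `x₁` in `h`.
For the weight `w = (1,3,2)` the order is additive, `f` has order `6`, and these monomials have
weights `5` and `1`, which forces `g` and `h` to have orders exactly `5` and `1`. Every splitting of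
`x₃³` into two monomials has even weights, so the coefficient of `x₃³` in `gh` vanishes, whereas
in `f` it is `1`.
-/

theorem convexHull_sep_le_subset {𝕜 E : Type*} [Field 𝕜] [LinearOrder 𝕜]
    [IsStrictOrderedRing 𝕜] [AddCommGroup E] [Module 𝕜 E] {l : E → 𝕜} (hl : IsLinearMap 𝕜 l)
    {T : Set E} {c : 𝕜} (hT : ∀ t ∈ T, c ≤ l t) :
    {x ∈ convexHull 𝕜 T | l x ≤ c} ⊆ convexHull 𝕜 {t ∈ T | l t ≤ c} := by
  let S : Set E := {x | c ≤ l x ∧ (l x ≤ c → x ∈ convexHull 𝕜 {t ∈ T | l t ≤ c})}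
  have hTS : T ⊆ S := fun t ht => ⟨hT t ht, fun htc => subset_convexHull 𝕜 _ ⟨ht, htc⟩⟩
  have hS : Convex 𝕜 S := by
    intro x hx y hy a b ha hb hab
    have hlin : l (a • x + b • y) = a * l x + b * l y := by
      rw [hl.map_add, hl.map_smul, hl.map_smul, smul_eq_mul, smul_eq_mul]
    have hc : c = a * c + b * c := by rw [← add_mul, hab, one_mul]
    refine ⟨by rw [hlin, hc]; gcongr; exacts [hx.1, hy.1], fun hle => ?_⟩
    rcases ha.eq_or_lt with rfl | ha'
    · rw [zero_add] at hab
      subst hab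
      rw [zero_smul, one_smul, zero_add] at hle ⊢
      exact hy.2 hle
    rcases hb.eq_or_lt with rfl | hb'
    · rw [add_zero] at hab
      subst hab
      rw [zero_smul, one_smul, add_zero] at hle ⊢
      exact hx.2 hle
    have hx' : l x ≤ c := by nlinarith [hx.1, hy.1]
    have hy' : l y ≤ c := by nlinarith [hx.1, hy.1]
    exact convex_convexHull 𝕜 _ (hx.2 hx') (hy.2 hy') ha hb hab
  exact fun x ⟨hx, hxc⟩ => (convexHull_min hTS hS hx).2 hxc

lemma MvPowerSeries.coeff_mul_eq_zero_of_weight_lt {σ R : Type*} [CommSemiring R]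
    (w : σ → ℕ) {f g : MvPowerSeries σ R} {d : σ →₀ ℕ}
    (h : ∀ a b : σ →₀ ℕ, a + b = d → (Finsupp.weight w a : ℕ∞) < f.weightedOrder w ∨
      (Finsupp.weight w b : ℕ∞) < g.weightedOrder w) :
    coeff d (f * g) = 0 := by
  classical
  rw [coeff_mul]
  refine Finset.sum_eq_zero fun p hp => ?_
  rcases h p.1 p.2 (Finset.HasAntidiagonal.mem_antidiagonal.1 hp) with h | h
  · rw [coeff_eq_zero_of_lt_weightedOrder w h, zero_mul]
  · rw [coeff_eq_zero_of_lt_weightedOrder w h, mul_zero]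

section NewtonPolyhedron

variable {K : Type*} [Field K] {n : ℕ}

lemma dotR_eq_dotProduct (ξ a : Fin n → ℝ) : dotR ξ a = ξ ⬝ᵥ a := rfl

lemma isLinearMap_dotR (ξ : Fin n → ℝ) : IsLinearMap ℝ (dotR ξ) :=
  ⟨dotProduct_add ξ, fun c x => dotProduct_smul c ξ x⟩

lemma dotR_nonneg {ξ z : Fin n → ℝ} (hξ : ∀ i, 0 ≤ ξ i) (hz : z ∈ posOrthant n) :
    0 ≤ dotR ξ z :=
  Finset.sum_nonneg fun i _ => mul_nonneg (hξ i) (hz i)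

lemma eq_zero_of_dotR_nonpos {ξ z : Fin n → ℝ} (hξ : ∀ i, 0 < ξ i) (hz : z ∈ posOrthant n)
    (h : dotR ξ z ≤ 0) : z = 0 := by
  have hterms := (Finset.sum_eq_zero_iff_of_nonneg fun i _ => mul_nonneg (hξ i).le (hz i)).1
    (h.antisymm (dotR_nonneg (fun i => (hξ i).le) hz))
  ext i
  exact (mul_eq_zero.1 (hterms i (Finset.mem_univ i))).resolve_left (hξ i).ne'

def newtonGenerators (f : MvPowerSeries (Fin n) K) : Set (Fin n → ℝ) :=
  {x | ∃ α : Fin n →₀ ℕ, MvPowerSeries.coeff α f ≠ 0 ∧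
    ∃ z ∈ posOrthant n, x = (fun i => (α i : ℝ)) + z}

lemma newtonPolyhedron_eq_convexHull (f : MvPowerSeries (Fin n) K) :
    newtonPolyhedron f = convexHull ℝ (newtonGenerators f) := rfl

lemma natCast_mem_newtonPolyhedron {f : MvPowerSeries (Fin n) K} {α : Fin n →₀ ℕ}
    (hα : MvPowerSeries.coeff α f ≠ 0) : (fun i => (α i : ℝ)) ∈ newtonPolyhedron f :=
  subset_convexHull ℝ _ ⟨α, hα, 0, fun _ => le_rfl, (add_zero _).symm⟩

lemma add_mem_newtonPolyhedron {f : MvPowerSeries (Fin n) K} {x z : Fin n → ℝ}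
    (hx : x ∈ newtonPolyhedron f) (hz : z ∈ posOrthant n) : x + z ∈ newtonPolyhedron f := by
  have hshift : newtonGenerators f + {z} ⊆ newtonGenerators f := by
    rintro _ ⟨_, ⟨α, hα, y, hy, rfl⟩, w, (hw : w = z), rfl⟩
    subst hw
    exact ⟨α, hα, y + w, fun i => add_nonneg (hy i) (hz i), add_assoc _ _ _⟩
  refine convexHull_mono hshift ?_
  rw [convexHull_add, convexHull_singleton, ← newtonPolyhedron_eq_convexHull]
  exact Set.add_mem_add hx rfl

lemma le_dotR_of_mem_newtonPolyhedron {f : MvPowerSeries (Fin n) K} {ξ : Fin n → ℝ}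
    (hξ : ∀ i, 0 ≤ ξ i) {c : ℝ}
    (hc : ∀ α, MvPowerSeries.coeff α f ≠ 0 → c ≤ dotR ξ (fun i => (α i : ℝ)))
    {x : Fin n → ℝ} (hx : x ∈ newtonPolyhedron f) : c ≤ dotR ξ x := by
  refine convexHull_min ?_ (convex_halfSpace_ge (isLinearMap_dotR ξ) c) hx
  rintro _ ⟨α, hα, z, hz, rfl⟩
  rw [Set.mem_ofPred_eq, (isLinearMap_dotR ξ).map_add]
  linarith [hc α hα, dotR_nonneg hξ hz]

lemma mem_convexHull_of_dotR_le {f : MvPowerSeries (Fin n) K} {ξ : Fin n → ℝ}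
    (hξ : ∀ i, 0 < ξ i) {c : ℝ}
    (hc : ∀ α, MvPowerSeries.coeff α f ≠ 0 → c ≤ dotR ξ (fun i => (α i : ℝ)))
    {x : Fin n → ℝ} (hx : x ∈ newtonPolyhedron f) (hxc : dotR ξ x ≤ c) :
    x ∈ convexHull ℝ {y | ∃ α : Fin n →₀ ℕ, MvPowerSeries.coeff α f ≠ 0 ∧
      dotR ξ (fun i => (α i : ℝ)) ≤ c ∧ y = fun i => (α i : ℝ)} := by
  refine convexHull_mono ?_ (convexHull_sep_le_subset (isLinearMap_dotR ξ) ?_ ⟨hx, hxc⟩)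
  · rintro _ ⟨⟨α, hα, z, hz, rfl⟩, hle⟩
    have hz0 : z = 0 := by
      rw [(isLinearMap_dotR ξ).map_add] at hle
      exact eq_zero_of_dotR_nonpos hξ hz (by linarith [hc α hα])
    subst hz0
    rw [add_zero] at hle ⊢
    exact ⟨α, hα, hle, rfl⟩
  · rintro _ ⟨α, hα, z, hz, rfl⟩
    rw [(isLinearMap_dotR ξ).map_add]
    linarith [hc α hα, dotR_nonneg (fun i => (hξ i).le) hz]

lemma pos_of_isCompact_faceOf {f : MvPowerSeries (Fin n) K} {ξ : Fin n → ℝ}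
    (hξ : ∀ i, 0 ≤ ξ i) (hne : (faceOf (newtonPolyhedron f) ξ).Nonempty)
    (hcpt : IsCompact (faceOf (newtonPolyhedron f) ξ)) (i : Fin n) : 0 < ξ i := by
  refine (hξ i).lt_of_ne fun hξi => ?_
  obtain ⟨x, hxΔ, hxmin⟩ := hne
  obtain ⟨M, hM⟩ := hcpt.bddAbove_image (continuous_apply i).continuousOn
  -- if `ξ i = 0`, the face is stable under translation along the `i`-th axis
  set z : Fin n → ℝ := Pi.single i (|M - x i| + 1)
  have hz : z ∈ posOrthant n := fun j => by
    rcases eq_or_ne j i with rfl | hj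
    · simp only [z, Pi.single_eq_same]
      positivity
    · simp [z, hj]
  have hxz : x + z ∈ faceOf (newtonPolyhedron f) ξ := by
    refine ⟨add_mem_newtonPolyhedron hxΔ hz, fun y hy => ?_⟩
    rw [(isLinearMap_dotR ξ).map_add, dotR_eq_dotProduct ξ z, dotProduct_single, ← hξi,
      zero_mul, add_zero]
    exact hxmin y hy
  have := hM ⟨x + z, hxz, rfl⟩
  simp only [z, Pi.add_apply, Pi.single_eq_same] at this
  linarith [le_abs_self (M - x i)]

open Classical in
lemma coeff_restrictPS (f : MvPowerSeries (Fin n) K) (A : Set (Fin n → ℝ)) (α : Fin n →₀ ℕ) :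
    MvPowerSeries.coeff α (restrictPS f A) =
      if (fun i => (α i : ℝ)) ∈ A then MvPowerSeries.coeff α f else 0 :=
  rfl

lemma coeff_ne_zero_of_coeff_restrictPS_ne_zero {f : MvPowerSeries (Fin n) K}
    {A : Set (Fin n → ℝ)} {α : Fin n →₀ ℕ}
    (h : MvPowerSeries.coeff α (restrictPS f A) ≠ 0) : MvPowerSeries.coeff α f ≠ 0 := by
  classical
  rw [coeff_restrictPS] at h
  split_ifs at h
  exacts [h, absurd rfl h]

end NewtonPolyhedron

section Counterexample

open MvPolynomial

variable {K : Type*} [Field K]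

abbrev expVec (a b c : ℕ) : Fin 3 →₀ ℕ := Finsupp.equivFunOnFinite.symm ![a, b, c]

@[simp] lemma coe_expVec (a b c : ℕ) : ⇑(expVec a b c) = ![a, b, c] := rfl

lemma eq_expVec_iff {α : Fin 3 →₀ ℕ} {a b c : ℕ} :
    α = expVec a b c ↔ α 0 = a ∧ α 1 = b ∧ α 2 = c := by
  rw [Equiv.eq_symm_apply, funext_iff, Fin.forall_fin_succ, Fin.forall_fin_succ,
    Fin.forall_fin_one]
  rfl

@[simp] lemma expVec_inj {a b c a' b' c' : ℕ} :
    expVec a b c = expVec a' b' c' ↔ a = a' ∧ b = b' ∧ c = c' := by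
  rw [eq_expVec_iff]
  rfl

lemma expVec_add (a b c a' b' c' : ℕ) :
    expVec a b c + expVec a' b' c' = expVec (a + a') (b + b') (c + c') := by
  ext i; fin_cases i <;> rfl

lemma natCast_expVec (a b c : ℕ) :
    (fun i => ((expVec a b c i : ℕ) : ℝ)) = ![(a : ℝ), b, c] := by
  ext i; fin_cases i <;> rfl

lemma dotR_vecCons (ξ : Fin 3 → ℝ) (a b c : ℝ) :
    dotR ξ ![a, b, c] = ξ 0 * a + ξ 1 * b + ξ 2 * c := by
  simp [dotR, Fin.sum_univ_three]

lemma X_eq_monomial_expVec :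
    (X 0 : MvPolynomial (Fin 3) K) = monomial (expVec 1 0 0) 1 ∧
    (X 1 : MvPolynomial (Fin 3) K) = monomial (expVec 0 1 0) 1 ∧
    (X 2 : MvPolynomial (Fin 3) K) = monomial (expVec 0 0 1) 1 := by
  refine ⟨?_, ?_, ?_⟩ <;> exact congrArg (monomial · 1) (by ext i; fin_cases i <;> simp)

abbrev counterPoly (K : Type*) [Field K] : MvPolynomial (Fin 3) K :=
  (X 2 ^ 2 + X 0 * X 1) * (X 2 + X 0 * X 1)

abbrev edge : Set (Fin 3 → ℝ) := segment ℝ ![1, 1, 1] ![2, 2, 0]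

lemma counterPoly_eq : counterPoly K = monomial (expVec 0 0 3) 1 + monomial (expVec 1 1 2) 1
    + monomial (expVec 1 1 1) 1 + monomial (expVec 2 2 0) 1 := by
  obtain ⟨h0, h1, h2⟩ := X_eq_monomial_expVec (K := K)
  simp only [h0, h1, h2, pow_two, monomial_mul, expVec_add, mul_one, add_mul, mul_add]
  ring

lemma coeff_counterPoly (α : Fin 3 →₀ ℕ) :
    MvPowerSeries.coeff α (counterPoly K : MvPowerSeries (Fin 3) K) =
      (if expVec 0 0 3 = α then 1 else 0) + (if expVec 1 1 2 = α then 1 else 0) +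
      (if expVec 1 1 1 = α then 1 else 0) + (if expVec 2 2 0 = α then 1 else 0) := by
  rw [MvPolynomial.coeff_coe, counterPoly_eq]
  simp only [coeff_add, coeff_monomial]

lemma eq_of_coeff_counterPoly_ne_zero {α : Fin 3 →₀ ℕ}
    (hα : MvPowerSeries.coeff α (counterPoly K : MvPowerSeries (Fin 3) K) ≠ 0) :
    α = expVec 0 0 3 ∨ α = expVec 1 1 2 ∨ α = expVec 1 1 1 ∨ α = expVec 2 2 0 := by
  contrapose! hα
  obtain ⟨h1, h2, h3, h4⟩ := hα
  rw [coeff_counterPoly]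
  simp [Ne.symm h1, Ne.symm h2, Ne.symm h3, Ne.symm h4]

lemma natCast_mem_edge_iff {α : Fin 3 →₀ ℕ} :
    (fun i => (α i : ℝ)) ∈ edge ↔ α = expVec 1 1 1 ∨ α = expVec 2 2 0 := by
  constructor
  · intro hα
    obtain ⟨t, ⟨ht0, ht1⟩, heq⟩ := (segment_eq_image' ℝ _ _).subset hα
    have h0 := congrFun heq 0
    have h1 := congrFun heq 1
    have h2 := congrFun heq 2
    simp only [Matrix.sub_cons, Matrix.head_cons, Matrix.tail_cons, Matrix.smul_cons,
      smul_eq_mul, Pi.add_apply, Matrix.cons_val_zero, Matrix.cons_val] at h0 h1 h2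
    have e0 : α 0 + α 2 = 2 := by exact_mod_cast (by linarith : (α 0 : ℝ) + α 2 = 2)
    have e1 : α 1 + α 2 = 2 := by exact_mod_cast (by linarith : (α 1 : ℝ) + α 2 = 2)
    have e2 : α 2 ≤ 1 := by exact_mod_cast (by linarith : (α 2 : ℝ) ≤ 1)
    simp only [eq_expVec_iff]
    omega
  · rintro (rfl | rfl) <;> rw [natCast_expVec] <;> push_cast
    exacts [left_mem_segment ℝ _ _, right_mem_segment ℝ _ _]

lemma dotR_natCast_of_coeff_counterPoly_ne_zero {ξ : Fin 3 → ℝ} (hs : ξ 2 = ξ 0 + ξ 1)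
    {α : Fin 3 →₀ ℕ}
    (hα : MvPowerSeries.coeff α (counterPoly K : MvPowerSeries (Fin 3) K) ≠ 0) :
    ((fun i => (α i : ℝ)) ∈ edge ∧ dotR ξ (fun i => (α i : ℝ)) = 2 * (ξ 0 + ξ 1)) ∨
      dotR ξ (fun i => (α i : ℝ)) = 3 * (ξ 0 + ξ 1) := by
  rcases eq_of_coeff_counterPoly_ne_zero hα with rfl | rfl | rfl | rfl <;>
    simp only [natCast_expVec, dotR_vecCons, hs] <;> push_cast
  · exact Or.inr (by ring)
  · exact Or.inr (by ring)
  · exact Or.inl ⟨left_mem_segment ℝ _ _, by ring⟩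
  · exact Or.inl ⟨right_mem_segment ℝ _ _, by ring⟩

lemma two_mul_le_dotR_of_coeff_counterPoly_ne_zero {ξ : Fin 3 → ℝ} (hξ : 0 ≤ ξ 0 + ξ 1)
    (hs : ξ 2 = ξ 0 + ξ 1) {α : Fin 3 →₀ ℕ}
    (hα : MvPowerSeries.coeff α (counterPoly K : MvPowerSeries (Fin 3) K) ≠ 0) :
    2 * (ξ 0 + ξ 1) ≤ dotR ξ (fun i => (α i : ℝ)) := by
  rcases dotR_natCast_of_coeff_counterPoly_ne_zero hs hα with ⟨-, h⟩ | h <;> linarith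

lemma edge_subset_newtonPolyhedron :
    edge ⊆ newtonPolyhedron (counterPoly K : MvPowerSeries (Fin 3) K) := by
  have hmem : ∀ a b c : ℕ, MvPowerSeries.coeff (expVec a b c)
      (counterPoly K : MvPowerSeries (Fin 3) K) ≠ 0 →
      ![(a : ℝ), b, c] ∈ newtonPolyhedron (counterPoly K : MvPowerSeries (Fin 3) K) :=
    fun a b c h => natCast_expVec a b c ▸ natCast_mem_newtonPolyhedron h
  refine (convex_convexHull ℝ _).segment_subset ?_ ?_
  · have h := hmem 1 1 1 (by rw [coeff_counterPoly]; simp)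
    rwa [Nat.cast_one] at h
  · have h := hmem 2 2 0 (by rw [coeff_counterPoly]; simp)
    rwa [Nat.cast_ofNat, Nat.cast_zero] at h

lemma edge_subset_faceOf {ξ : Fin 3 → ℝ} (h0 : 0 ≤ ξ 0) (h1 : 0 ≤ ξ 1)
    (hs : ξ 2 = ξ 0 + ξ 1) :
    edge ⊆ faceOf (newtonPolyhedron (counterPoly K : MvPowerSeries (Fin 3) K)) ξ := by
  have hξ : ∀ i, 0 ≤ ξ i := by
    intro i; fin_cases i
    exacts [h0, h1, hs ▸ add_nonneg h0 h1]
  have hup : edge ⊆ {x | dotR ξ x ≤ 2 * (ξ 0 + ξ 1)} := by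
    refine (convex_halfSpace_le (isLinearMap_dotR ξ) _).segment_subset ?_ ?_ <;>
      simp only [Set.mem_ofPred_eq, dotR_vecCons, hs] <;> linarith
  exact fun x hx => ⟨edge_subset_newtonPolyhedron hx, fun y hy => (hup hx).trans
    (le_dotR_of_mem_newtonPolyhedron hξ
      (fun _ => two_mul_le_dotR_of_coeff_counterPoly_ne_zero (add_nonneg h0 h1) hs) hy)⟩

lemma faceOf_subset_edge {ξ : Fin 3 → ℝ} (h0 : 0 < ξ 0) (h1 : 0 < ξ 1)
    (hs : ξ 2 = ξ 0 + ξ 1) :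
    faceOf (newtonPolyhedron (counterPoly K : MvPowerSeries (Fin 3) K)) ξ ⊆ edge := by
  have hξ : ∀ i, 0 < ξ i := by
    intro i; fin_cases i
    exacts [h0, h1, hs ▸ add_pos h0 h1]
  rintro x ⟨hx, hmin⟩
  have hxc : dotR ξ x ≤ 2 * (ξ 0 + ξ 1) := by
    refine (hmin _ (edge_subset_newtonPolyhedron (left_mem_segment ℝ _ _))).trans_eq ?_
    rw [dotR_vecCons, hs]
    ring
  refine (convex_segment _ _).convexHull_subset_iff.2 ?_ (mem_convexHull_of_dotR_le hξ
    (fun _ => two_mul_le_dotR_of_coeff_counterPoly_ne_zero (add_pos h0 h1).le hs) hx hxc)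
  rintro _ ⟨α, hα, hle, rfl⟩
  rcases dotR_natCast_of_coeff_counterPoly_ne_zero hs hα with ⟨hE, -⟩ | h
  · exact hE
  · linarith

lemma faceDim_edge : faceDim edge = 1 := by
  rw [faceDim, vectorSpan_segment]
  refine finrank_span_singleton fun h => ?_
  simpa using congrFun h 2

lemma isLooseEdge_edge :
    IsLooseEdge (newtonPolyhedron (counterPoly K : MvPowerSeries (Fin 3) K)) edge := by
  have hs : (![1, 1, 2] : Fin 3 → ℝ) 2 = ![1, 1, 2] 0 + ![1, 1, 2] 1 := by
    simp only [Matrix.cons_val]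
    norm_num
  refine ⟨⟨![1, 1, 2], ?_, ?_⟩, ?_, faceDim_edge, ?_⟩
  · intro i; fin_cases i <;> norm_num
  · exact (edge_subset_faceOf (by norm_num) (by norm_num) hs).antisymm
      (faceOf_subset_edge (by norm_num) (by norm_num) hs)
  · rw [edge, ← convexHull_pair (𝕜 := ℝ)]
    exact (Set.toFinite _).isCompact_convexHull ℝ
  · rintro F ⟨ξ, hξ, rfl⟩ hcpt hEF
    have hpos := pos_of_isCompact_faceOf hξ ⟨_, hEF (left_mem_segment ℝ _ _)⟩ hcpt
    have hs : ξ 2 = ξ 0 + ξ 1 := by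
      have hab := (hEF (left_mem_segment ℝ _ _)).2 _ (hEF (right_mem_segment ℝ _ _)).1
      have hba := (hEF (right_mem_segment ℝ _ _)).2 _ (hEF (left_mem_segment ℝ _ _)).1
      simp only [dotR_vecCons] at hab hba
      linarith
    exact (Submodule.finrank_mono (vectorSpan_mono ℝ
      (faceOf_subset_edge (hpos 0) (hpos 1) hs))).trans faceDim_edge.le

lemma edgePoly_eq : (X 0 * X 1 * (X 2 + X 0 * X 1) : MvPolynomial (Fin 3) K) =
    monomial (expVec 1 1 1) 1 + monomial (expVec 2 2 0) 1 := by
  obtain ⟨h0, h1, h2⟩ := X_eq_monomial_expVec (K := K)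
  simp only [h0, h1, h2, monomial_mul, expVec_add, mul_one, mul_add]

lemma restrictPS_counterPoly_edge :
    restrictPS (counterPoly K : MvPowerSeries (Fin 3) K) edge =
      ((X 0 * X 1 * (X 2 + X 0 * X 1) : MvPolynomial (Fin 3) K) : MvPowerSeries (Fin 3) K) := by
  ext α
  rw [coeff_restrictPS, edgePoly_eq, MvPolynomial.coeff_coe (_ + _), coeff_add, coeff_monomial,
    coeff_monomial]
  by_cases hα : (fun i => (α i : ℝ)) ∈ edge
  · rw [if_pos hα]
    rcases natCast_mem_edge_iff.1 hα with rfl | rfl <;> rw [coeff_counterPoly] <;> simp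
  · rw [if_neg hα]
    rw [natCast_mem_edge_iff, not_or] at hα
    rw [if_neg (Ne.symm hα.1), if_neg (Ne.symm hα.2), add_zero]

lemma weight_fin3 (w : Fin 3 → ℕ) (α : Fin 3 →₀ ℕ) :
    Finsupp.weight w α = α 0 * w 0 + α 1 * w 1 + α 2 * w 2 := by
  simp [Finsupp.weight_apply, Finsupp.sum_fintype, Fin.sum_univ_three]

lemma six_le_weightedOrder_counterPoly :
    6 ≤ (counterPoly K : MvPowerSeries (Fin 3) K).weightedOrder ![1, 3, 2] := by
  refine MvPowerSeries.nat_le_weightedOrder _ fun α hα => ?_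
  by_contra hne
  rcases eq_of_coeff_counterPoly_ne_zero hne with rfl | rfl | rfl | rfl <;>
    simp [weight_fin3] at hα

lemma not_counterPoly_eq_mul {g h : MvPowerSeries (Fin 3) K}
    (hgh : (counterPoly K : MvPowerSeries (Fin 3) K) = g * h)
    (hg : MvPowerSeries.coeff (expVec 0 1 1) g ≠ 0)
    (hh : MvPowerSeries.coeff (expVec 1 0 0) h ≠ 0) : False := by
  set w : Fin 3 → ℕ := ![1, 3, 2]
  have hg5 : g.weightedOrder w ≤ 5 :=
    (MvPowerSeries.weightedOrder_le w hg).trans (by simp [w, weight_fin3])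
  have hh1 : h.weightedOrder w ≤ 1 :=
    (MvPowerSeries.weightedOrder_le w hh).trans (by simp [w, weight_fin3])
  have h6 : 6 ≤ g.weightedOrder w + h.weightedOrder w := by
    rw [← MvPowerSeries.weightedOrder_mul, ← hgh]
    exact six_le_weightedOrder_counterPoly
  have horders : 5 ≤ g.weightedOrder w ∧ 1 ≤ h.weightedOrder w := by
    generalize g.weightedOrder w = a at *
    generalize h.weightedOrder w = b at *
    lift a to ℕ using ne_top_of_le_ne_top (by simp) hg5
    lift b to ℕ using ne_top_of_le_ne_top (by simp) hh1
    norm_cast at *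
    omega
  have h003 : MvPowerSeries.coeff (expVec 0 0 3) (g * h) = 0 := by
    refine MvPowerSeries.coeff_mul_eq_zero_of_weight_lt w fun p q hpq => ?_
    rw [eq_expVec_iff] at hpq
    simp only [Finsupp.coe_add, Pi.add_apply] at hpq
    have hlt : Finsupp.weight w p < 5 ∨ Finsupp.weight w q < 1 := by
      simp only [weight_fin3, w, Matrix.cons_val]
      omega
    exact hlt.imp (fun hp => lt_of_lt_of_le (by exact_mod_cast hp) horders.1)
      (fun hq => lt_of_lt_of_le (by exact_mod_cast hq) horders.2)
  rw [← hgh, coeff_counterPoly] at h003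
  simp at h003

end Counterexample

open MvPolynomial in
open scoped Pointwise in
/-- The counterexample: for `f = (x₃² + x₁x₂)(x₃ + x₁x₂)`, the Newton polyhedron has a
loose edge `E` with endpoints `(1,1,1)` and `(2,2,0)`, and `f|_E = x₁x₂(x₃ + x₁x₂)`;
nevertheless `f` admits no factorization `f = g·h` with `g|_{E₁} = x₂(x₃ + x₁x₂)` and
`h|_{E₂} = x₁` for any Minkowski decomposition `E = E₁ + E₂`. -/
theorem counterexample_divisible_initial {K : Type*} [Field K] :
    ∀ (f : MvPowerSeries (Fin 3) K),
    f = (((X 2 ^ 2 + X 0 * X 1) * (X 2 + X 0 * X 1) : MvPolynomial (Fin 3) K) :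
      MvPowerSeries (Fin 3) K) →
    ∀ (E : Set (Fin 3 → ℝ)), E = segment ℝ ![1, 1, 1] ![2, 2, 0] →
    IsLooseEdge (newtonPolyhedron f) E ∧
    restrictPS f E
      = ((X 0 * X 1 * (X 2 + X 0 * X 1) : MvPolynomial (Fin 3) K) :
          MvPowerSeries (Fin 3) K) ∧
    ¬ ∃ (g h : MvPowerSeries (Fin 3) K) (E₁ E₂ : Set (Fin 3 → ℝ)),
        f = g * h ∧ E = E₁ + E₂ ∧
        restrictPS g E₁
          = ((X 1 * (X 2 + X 0 * X 1) : MvPolynomial (Fin 3) K) : MvPowerSeries (Fin 3) K) ∧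
        restrictPS h E₂ = ((X 0 : MvPolynomial (Fin 3) K) : MvPowerSeries (Fin 3) K) := by
  rintro f rfl E rfl
  refine ⟨isLooseEdge_edge, restrictPS_counterPoly_edge, ?_⟩
  rintro ⟨g, h, E₁, E₂, hgh, -, hg, hh⟩
  obtain ⟨hX0, hX1, hX2⟩ := X_eq_monomial_expVec (K := K)
  refine not_counterPoly_eq_mul hgh (coeff_ne_zero_of_coeff_restrictPS_ne_zero (A := E₁) ?_)
    (coeff_ne_zero_of_coeff_restrictPS_ne_zero (A := E₂) ?_)
  · rw [hg, MvPolynomial.coeff_coe]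
    simp [hX0, hX1, hX2, monomial_mul, expVec_add, mul_add, coeff_monomial]
  · rw [hh, MvPolynomial.coeff_coe, hX0, coeff_monomial, if_pos rfl]
    exact one_ne_zero
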